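/- arXiv:2509.05798 — 5 statements merged into one kernel-verified Lean document; each statement's English description precedes it below -/
import Mathlib

section
/- Let $Q$ be a finitely generated abelian group and $A = \mathbb{Z}Q/I$ an integral domain of characteristic 0, a quotient of the integral group ring $\mathbb{Z}Q$. Then the Krull dimension of $B = A \otimes_{\mathbb{Z}} \mathbb{Q}$ is at most $\mathrm{Krulldim}(A) - 1$. -/
open scoped TensorProduct

section Aux

variable {A : Type*} [CommRing A]

attribute [local instance] Algebra.TensorProduct.rightAlgebra in
lemma aux_isLocalization :
    IsLocalization (Algebra.algebraMapSubmonoid A (nonZeroDivisors ℤ)) (A ⊗[ℤ] ℚ) := by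
  have hpush : Algebra.IsPushout ℤ ℚ A (A ⊗[ℤ] ℚ) := TensorProduct.isPushout'
  rw [← isLocalizedModule_iff_isLocalization,
    isLocalizedModule_iff_isBaseChange (nonZeroDivisors ℤ) ℚ]
  exact hpush.out

end Aux

instance aux_isJacobsonRing_int : IsJacobsonRing ℤ := by
  rw [isJacobsonRing_iff_prime_eq]
  intro P hP
  by_cases hbot : P = ⊥
  · subst hbot
    refine le_antisymm ?_ Ideal.le_jacobson
    intro x hx
    rw [Ideal.mem_jacobson_bot] at hx
    have h1 := hx 1
    have h2 := hx (-1)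
    rw [Int.isUnit_iff] at h1 h2
    have : x = 0 := by omega
    simp [this]
  · haveI := IsPrime.to_maximal_ideal hbot
    exact Ideal.jacobson_eq_self_of_isMaximal

/-- A field which is the surjective image of a finite type `ℤ`-algebra kills
some nonzero integer. -/
lemma aux_field {A K : Type*} [CommRing A] [Algebra.FiniteType ℤ A] [Field K]
    (f : A →+* K) (hf : Function.Surjective f) :
    ∃ n : ℤ, n ≠ 0 ∧ f (algebraMap ℤ A n) = 0 := by
  haveI : Algebra.FiniteType ℤ K :=
    Algebra.FiniteType.of_surjective f.toIntAlgHom hf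
  haveI : Module.Finite ℤ K := finite_of_finite_type_of_isJacobsonRing ℤ K
  haveI : Algebra.IsIntegral ℤ K := Algebra.IsIntegral.of_finite ℤ K
  have hint : (algebraMap ℤ K).IsIntegral := Algebra.isIntegral_def.mp ‹_›
  haveI : (⊥ : Ideal K).IsMaximal := Ideal.bot_isMaximal
  have hJ : (Ideal.comap (algebraMap ℤ K) ⊥).IsMaximal :=
    Ideal.isMaximal_comap_of_isIntegral_of_isMaximal' _ hint ⊥
  set J := Ideal.comap (algebraMap ℤ K) (⊥ : Ideal K) with hJdef
  have hJne : J ≠ ⊥ := by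
    intro h
    have h2 : Ideal.span {(2 : ℤ)} = ⊤ := by
      refine hJ.1.2 _ ?_
      rw [h]
      refine lt_of_le_of_ne bot_le ?_
      intro hsp
      have h2m : (2 : ℤ) ∈ Ideal.span {(2 : ℤ)} := Ideal.subset_span rfl
      rw [← hsp] at h2m
      simp at h2m
    rw [Ideal.span_singleton_eq_top, Int.isUnit_iff] at h2
    omega
  obtain ⟨n, hnJ, hn0⟩ := Submodule.exists_mem_ne_zero_of_ne_bot hJne
  refine ⟨n, hn0, ?_⟩
  have : algebraMap ℤ K n = 0 := by
    simpa [hJdef, Ideal.mem_comap] using hnJ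
  calc f (algebraMap ℤ A n) = algebraMap ℤ K n := by
        simp [algebraMap_int_eq, map_intCast]
    _ = 0 := this

/-- Every maximal ideal of a finite type `ℤ`-algebra contains a nonzero integer. -/
lemma aux_max {A : Type*} [CommRing A] [Algebra.FiniteType ℤ A]
    (m : Ideal A) (hm : m.IsMaximal) :
    ∃ n : ℤ, n ≠ 0 ∧ algebraMap ℤ A n ∈ m := by
  letI : Field (A ⧸ m) := @Ideal.Quotient.field A _ m hm
  obtain ⟨n, hn0, hn⟩ := aux_field (Ideal.Quotient.mk m) Ideal.Quotient.mk_surjective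
  exact ⟨n, hn0, Ideal.Quotient.eq_zero_iff_mem.mp hn⟩

set_option maxHeartbeats 1000000 in
set_option synthInstance.maxHeartbeats 400000 in
/-- Let `Q` be a finitely generated abelian group and `A = ℤQ ⧸ I` an integral
domain of characteristic `0`.  Then the Krull dimension of `B = A ⊗[ℤ] ℚ`
satisfies `Krulldim B + 1 ≤ Krulldim A` (i.e. `Krulldim B ≤ Krulldim A - 1`). -/
theorem krullDim_tensor_rat_le {Q : Type*} [CommGroup Q] [Group.FG Q]
    (I : Ideal (MonoidAlgebra ℤ Q))
    [IsDomain (MonoidAlgebra ℤ Q ⧸ I)] [CharZero (MonoidAlgebra ℤ Q ⧸ I)] :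
    ringKrullDim ((MonoidAlgebra ℤ Q ⧸ I) ⊗[ℤ] ℚ) + 1 ≤
      ringKrullDim (MonoidAlgebra ℤ Q ⧸ I) := by
  set A := MonoidAlgebra ℤ Q ⧸ I with hA
  set B := A ⊗[ℤ] ℚ with hB
  set M := Algebra.algebraMapSubmonoid A (nonZeroDivisors ℤ) with hM
  haveI hloc : IsLocalization M B := aux_isLocalization
  haveI : Monoid.FG Q := Group.fg_iff_monoid_fg.mp ‹_›
  haveI hft : Algebra.FiniteType ℤ A :=
    Algebra.FiniteType.of_surjective (Ideal.Quotient.mkₐ ℤ I)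
      (Ideal.Quotient.mkₐ_surjective ℤ I)
  have hMle : M ≤ nonZeroDivisors A := by
    rintro x ⟨n, hn, rfl⟩
    have hd : IsDomain A := ‹IsDomain (MonoidAlgebra ℤ Q ⧸ I)›
    have hz : (n : A) ≠ 0 := Int.cast_ne_zero.mpr (nonZeroDivisors.ne_zero hn)
    exact mem_nonZeroDivisors_of_ne_zero (by simpa using hz)
  have hinj : Function.Injective (algebraMap A B) := IsLocalization.injective B hMle
  haveI : Nontrivial B :=
    ⟨⟨algebraMap A B 1, algebraMap A B 0, fun h => one_ne_zero (hinj h)⟩⟩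
  have hsm : StrictMono (PrimeSpectrum.comap (algebraMap A B)) := by
    have hmono : Monotone (PrimeSpectrum.comap (algebraMap A B)) := fun p q h =>
      Ideal.comap_mono h
    exact hmono.strictMono_of_injective (PrimeSpectrum.localization_comap_injective B M)
  haveI : Nonempty (PrimeSpectrum B) := inferInstance
  rw [ringKrullDim, ringKrullDim, Order.krullDim_eq_iSup_length]
  have h1 : ((1 : WithBot ℕ∞)) = ((1 : ℕ∞) : WithBot ℕ∞) := rfl
  rw [h1, ← WithBot.coe_add, ENat.iSup_add, WithBot.coe_iSup (OrderTop.bddAbove _)]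
  refine iSup_le fun p => ?_
  set P : PrimeSpectrum A := PrimeSpectrum.comap (algebraMap A B) p.last with hP
  have hdisj : ∀ x ∈ M, x ∉ P.asIdeal := by
    intro x hxM hxP
    have hu : IsUnit (algebraMap A B x) := IsLocalization.map_units B ⟨x, hxM⟩
    exact p.last.isPrime.ne_top (Ideal.eq_top_of_isUnit_mem _ hxP hu)
  obtain ⟨m, hmmax, hle⟩ := Ideal.exists_le_maximal P.asIdeal P.isPrime.ne_top
  obtain ⟨n, hn0, hnm⟩ := @aux_max A _ hft m hmmax
  have hne : P.asIdeal ≠ m := by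
    intro h
    exact hdisj (algebraMap ℤ A n)
      ⟨n, mem_nonZeroDivisors_of_ne_zero hn0, rfl⟩ (h ▸ hnm)
  have hlt : (p.map _ hsm).last < ⟨m, hmmax.isPrime⟩ := by
    rw [LTSeries.last_map, ← PrimeSpectrum.asIdeal_lt_asIdeal]
    exact lt_of_le_of_ne hle hne
  have hq := Order.LTSeries.length_le_krullDim ((p.map _ hsm).snoc ⟨m, hmmax.isPrime⟩ hlt)
  have hlen : ((p.map _ hsm).snoc ⟨m, hmmax.isPrime⟩ hlt).length = p.length + 1 := by simp
  rw [hlen] at hq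
  exact_mod_cast hq
end

section
/- Let $A$ be a commutative ring, $B \subseteq A$ a subring such that $A$ is a finitely generated $B$-module, and $A_0 \leq A$ an additive subgroup of finite index. If $B \cap A_0$ is contained in a proper ideal $P$ of $A$ such that $A/P$ is infinite, then we reach a contradiction; i.e., $B \cap A_0$ is not contained in any ideal $P$ of $A$ with $A/P$ infinite. In particular, if for primes $p_1,\ldots,p_u$ each $A/p_iA$ is an infinite integral domain, then $(B \cap A_0) \setminus \bigcup_{i=1}^u p_iA$ is nonempty. -/
set_option synthInstance.maxHeartbeats 800000 in
set_option maxHeartbeats 1600000 in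
/-- Let `A` be a commutative ring, `B ⊆ A` a subring such that `A` is a finitely
generated `B`-module, and `A₀ ≤ A` an additive subgroup of finite index.
Then `B ∩ A₀` is not contained in any proper ideal `P` of `A` with `A ⧸ P`
infinite. -/
theorem inter_not_subset_infinite_quotient_ideal {A : Type*} [CommRing A]
    (B : Subring A) [Module.Finite B A]
    (A₀ : AddSubgroup A) [A₀.FiniteIndex]
    (P : Ideal A) (hP : P ≠ ⊤)
    (hsub : (B : Set A) ∩ (A₀ : Set A) ⊆ (P : Set A)) :
    ¬ Infinite (A ⧸ P) := by
  set J : Ideal B := P.comap B.subtype with hJ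
  have hle : A₀.addSubgroupOf B.toAddSubgroup ≤ J.toAddSubgroup := by
    intro b hb
    exact hsub ⟨b.2, hb⟩
  have hdvd := AddSubgroup.relIndex_dvd_index_of_normal A₀ B.toAddSubgroup
  have hidx : (A₀.addSubgroupOf B.toAddSubgroup).index ≠ 0 := fun h =>
    AddSubgroup.FiniteIndex.index_ne_zero (Nat.eq_zero_of_zero_dvd (by
      rwa [AddSubgroup.relIndex, h] at hdvd))
  haveI : (J.toAddSubgroup).FiniteIndex :=
    haveI : (A₀.addSubgroupOf B.toAddSubgroup).FiniteIndex := ⟨hidx⟩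
    AddSubgroup.finiteIndex_of_le hle
  haveI : Finite (B ⧸ J) :=
    AddSubgroup.finite_quotient_of_finiteIndex (H := J.toAddSubgroup)
  letI : Algebra (B ⧸ J) (A ⧸ P) := Ideal.Quotient.algebraQuotientOfLEComap (p := J) (P := P) le_rfl
  haveI : Module.Finite B (A ⧸ P) := Module.Finite.of_surjective
    (Ideal.Quotient.mkₐ B P).toLinearMap Ideal.Quotient.mk_surjective
  haveI : IsScalarTower B (B ⧸ J) (A ⧸ P) := ⟨fun x y z => by
    obtain ⟨y, rfl⟩ := Ideal.Quotient.mk_surjective y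
    obtain ⟨z, rfl⟩ := Ideal.Quotient.mk_surjective z
    change Ideal.Quotient.mk P ((x • y : B) * z : A) = x • Ideal.Quotient.mk P ((y : A) * z)
    have h2 : x • (Ideal.Quotient.mk P) ((y : A) * z)
        = (Ideal.Quotient.mk P) (x • ((y : A) * z)) := rfl
    rw [h2]
    congr 1
    simp [Subring.smul_def, smul_eq_mul, mul_assoc]⟩
  haveI : Module.Finite (B ⧸ J) (A ⧸ P) :=
    Module.Finite.of_restrictScalars_finite B _ _
  have : Finite (A ⧸ P) := Module.finite_of_finite (B ⧸ J)
  intro h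
  exact not_finite (A ⧸ P)
end

section
/- Let $G = A \rtimes Q$ be a group with $A$ and $Q$ abelian, and let $f : H \to G$ be a group homomorphism where $H = A_0 \rtimes Q_0$ with $A_0 \leq A$, $Q_0 \leq Q$, and $f(A_0) \subseteq A$. Then there exists a group homomorphism $\hat{f} : H \to G$ such that $\hat{f}$ agrees with $f$ on $A_0$ and $\hat{f}(Q_0) \subseteq Q$. Explicitly, writing $f(q) = a_q \tilde{q}$ with $a_q \in A$, $\tilde{q} \in Q$, the map $\hat{f}(a q) = f(a)\tilde{q}$ is a homomorphism. -/
open SemidirectProduct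

/-- Let `G = A ⋊ Q` with `A, Q` abelian, `H = A₀ ⋊ Q₀` (for `A₀ ≤ A`, `Q₀ ≤ Q`
with `A₀` invariant under `Q₀`), and `f : H → G` a homomorphism with
`f(A₀) ⊆ A`.  Then there is a homomorphism `ĝ : H → G` agreeing with `f` on
`A₀` and with `ĝ(Q₀) ⊆ Q`. -/
theorem virtual_endo_adjust {A Q : Type*} [CommGroup A] [CommGroup Q]
    (φ : Q →* MulAut A) (A₀ : Subgroup A) (Q₀ : Subgroup Q)
    (hinv : ∀ q ∈ Q₀, ∀ a ∈ A₀, φ q a ∈ A₀)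
    (H : Subgroup (A ⋊[φ] Q))
    (hH : H = A₀.map (inl : A →* A ⋊[φ] Q) ⊔ Q₀.map (inr : Q →* A ⋊[φ] Q))
    (f : H →* A ⋊[φ] Q)
    (hfA : ∀ x : H, (x : A ⋊[φ] Q) ∈ A₀.map (inl : A →* A ⋊[φ] Q) →
      ∃ a' : A, f x = inl a') :
    ∃ g : H →* A ⋊[φ] Q,
      (∀ x : H, (x : A ⋊[φ] Q) ∈ A₀.map (inl : A →* A ⋊[φ] Q) → g x = f x) ∧
      (∀ x : H, (x : A ⋊[φ] Q) ∈ Q₀.map (inr : Q →* A ⋊[φ] Q) →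
        ∃ q' : Q, g x = inr q') := by
  classical
  -- A subgroup `K` describing `H` explicitly.
  let K : Subgroup (A ⋊[φ] Q) :=
    { carrier := {x | x.left ∈ A₀ ∧ x.right ∈ Q₀}
      one_mem' := ⟨A₀.one_mem, Q₀.one_mem⟩
      mul_mem' := by
        rintro x y ⟨hxa, hxq⟩ ⟨hya, hyq⟩
        exact ⟨by rw [mul_left]; exact A₀.mul_mem hxa (hinv _ hxq _ hya),
          by rw [mul_right]; exact Q₀.mul_mem hxq hyq⟩
      inv_mem' := by
        rintro x ⟨hxa, hxq⟩
        exact ⟨by rw [inv_left]; exact hinv _ (Q₀.inv_mem hxq) _ (A₀.inv_mem hxa),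
          by rw [inv_right]; exact Q₀.inv_mem hxq⟩ }
  have hH' : H = K := by
    rw [hH]
    apply le_antisymm
    · apply sup_le
      · rintro x ⟨a, ha, rfl⟩
        exact ⟨by simpa using ha, by simp⟩
      · rintro x ⟨q, hq, rfl⟩
        exact ⟨by simp, by simpa using hq⟩
    · rintro x ⟨hxa, hxq⟩
      have hx : x = inl x.left * inr x.right := by
        ext <;> simp
      rw [hx]
      exact mul_mem (Subgroup.mem_sup_left ⟨x.left, hxa, rfl⟩)
        (Subgroup.mem_sup_right ⟨x.right, hxq, rfl⟩)
  have hHK : ∀ z : A ⋊[φ] Q, z ∈ H ↔ (z.left ∈ A₀ ∧ z.right ∈ Q₀) := by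
    intro z
    rw [hH']
    exact Iff.rfl
  have hmem : ∀ x : H, ((x : A ⋊[φ] Q).left ∈ A₀ ∧ (x : A ⋊[φ] Q).right ∈ Q₀) :=
    fun x => (hHK _).mp x.2
  -- the "Q-part" element of H associated to x
  let qel : H → H := fun x => ⟨inr (x : A ⋊[φ] Q).right,
    (hHK _).mpr ⟨by simp, by simpa using (hmem x).2⟩⟩
  let ael : H → H := fun x => ⟨inl (x : A ⋊[φ] Q).left,
    (hHK _).mpr ⟨by simpa using (hmem x).1, by simp⟩⟩
  have hdecomp : ∀ x : H, x = ael x * qel x := by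
    intro x
    apply Subtype.ext
    show (x : A ⋊[φ] Q) = inl (x : A ⋊[φ] Q).left * inr (x : A ⋊[φ] Q).right
    ext <;> simp
  have haelA : ∀ x : H, ((ael x : H) : A ⋊[φ] Q) ∈ A₀.map (inl : A →* A ⋊[φ] Q) :=
    fun x => ⟨(x : A ⋊[φ] Q).left, (hmem x).1, rfl⟩
  -- right component of f x depends only on qel x
  have hR : ∀ x : H, (f x).right = (f (qel x)).right := by
    intro x
    obtain ⟨a', ha'⟩ := hfA (ael x) (haelA x)
    calc (f x).right = (f (ael x * qel x)).right := by rw [← hdecomp]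
      _ = (f (ael x)).right * (f (qel x)).right := by rw [map_mul, mul_right]
      _ = (f (qel x)).right := by rw [ha']; simp
  have hqelmul : ∀ x y : H, qel (x * y) = qel x * qel y := by
    intro x y
    apply Subtype.ext
    show (inr ((x * y : H) : A ⋊[φ] Q).right : A ⋊[φ] Q)
      = inr (x : A ⋊[φ] Q).right * inr (y : A ⋊[φ] Q).right
    rw [← map_mul]
    rfl
  set c : H → A := fun x => (f (qel x)).left with hc
  have hcmul : ∀ x y : H, c (x * y) = c x * φ ((f x).right) (c y) := by
    intro x y
    show (f (qel (x * y))).left = _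
    rw [hqelmul, map_mul, mul_left, ← hR]
  have hqone : qel 1 = 1 := by
    apply Subtype.ext
    show (inr ((1 : H) : A ⋊[φ] Q).right : A ⋊[φ] Q) = 1
    simp
  have hcone : c 1 = 1 := by
    show (f (qel 1)).left = 1
    rw [hqone, map_one]; rfl
  refine ⟨{ toFun := fun x => ⟨(f x).left * (c x)⁻¹, (f x).right⟩
            map_one' := by
              show (⟨(f 1).left * (c 1)⁻¹, (f 1).right⟩ : A ⋊[φ] Q) = 1
              rw [hcone, map_one]
              ext <;> simp
            map_mul' := by
              intro x y
              ext
              · show (f (x * y)).left * (c (x * y))⁻¹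
                  = ((f x).left * (c x)⁻¹) * φ ((f x).right) ((f y).left * (c y)⁻¹)
                rw [hcmul, map_mul f, mul_left, mul_inv,
                  map_mul (φ ((f x).right)), map_inv]
                exact mul_mul_mul_comm _ _ _ _
              · show (f (x * y)).right = (f x).right * (f y).right
                rw [map_mul, mul_right] }, ?_, ?_⟩
  · intro x hx
    obtain ⟨a, _, hax⟩ := hx
    have hxr : (x : A ⋊[φ] Q).right = 1 := by rw [← hax]; simp
    have : qel x = 1 := by
      apply Subtype.ext
      show (inr (x : A ⋊[φ] Q).right : A ⋊[φ] Q) = 1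
      rw [hxr, map_one]
    have hcx : c x = 1 := by show (f (qel x)).left = 1; rw [this, map_one]; rfl
    show (⟨(f x).left * (c x)⁻¹, (f x).right⟩ : A ⋊[φ] Q) = f x
    rw [hcx]
    ext <;> simp
  · intro x hx
    obtain ⟨q, _, hqx⟩ := hx
    have hxl : (x : A ⋊[φ] Q).left = 1 := by rw [← hqx]; simp
    have hqel : qel x = x := by
      apply Subtype.ext
      show (inr (x : A ⋊[φ] Q).right : A ⋊[φ] Q) = x
      ext <;> simp [hxl]
    have hcx : c x = (f x).left := by show (f (qel x)).left = _; rw [hqel]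
    refine ⟨(f x).right, ?_⟩
    show (⟨(f x).left * (c x)⁻¹, (f x).right⟩ : A ⋊[φ] Q) = inr (f x).right
    rw [hcx]
    ext <;> simp
end

section
/- Let $G = A \rtimes Q$ with $A, Q$ abelian, where $A \cong \mathbb{Z}Q/I$ is an integral domain (as a ring) with $Q$ acting via conjugation and $C_Q(A) = 1$. Let $f : A_0 \rtimes Q_0 \to G$ be a homomorphism where $A_0, Q_0$ have finite index in $A, Q$ respectively, and suppose $f(A_0) \not\subseteq A$. Set $A_1 = \{a \in A_0 : f(a) \in A\}$. Then $f(A_1) = 1$ and $A_0/A_1$ embeds into $Q$; in particular $A_0/A_1$ is a finitely generated abelian group. -/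
open SemidirectProduct

set_option synthInstance.maxHeartbeats 1000000 in
/-- Let `G = A ⋊ Q` with `A ≅ ℤQ ⧸ I` an integral domain (with `Q` acting by
multiplication with the image of `Q`, i.e. by conjugation in `G`) and
`C_Q(A) = 1`.  Let `f : A₀ ⋊ Q₀ → G` be a homomorphism, with `A₀, Q₀` of finite
index in `A, Q`, such that `f(A₀) ⊄ A`.  Set `A₁ = {a ∈ A₀ : f(a) ∈ A}`.
Then `f(A₁) = 1` and `A₀ ⧸ A₁` embeds into `Q` (there is a homomorphism
`A₀ → Q` whose kernel is exactly `A₁`). -/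
theorem virtual_endo_not_into_A {Q : Type*} [CommGroup Q]
    (I : Ideal (MonoidAlgebra ℤ Q)) [IsDomain (MonoidAlgebra ℤ Q ⧸ I)]
    (φ : Q →* MulAut (Multiplicative (MonoidAlgebra ℤ Q ⧸ I)))
    (hφ : ∀ (q : Q) (r : MonoidAlgebra ℤ Q ⧸ I),
      φ q (Multiplicative.ofAdd r)
        = Multiplicative.ofAdd (r * Ideal.Quotient.mk I (MonoidAlgebra.of ℤ Q q)))
    (hC : ∀ q : Q, (∀ r : Multiplicative (MonoidAlgebra ℤ Q ⧸ I), φ q r = r) → q = 1)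
    (A₀ : Subgroup (Multiplicative (MonoidAlgebra ℤ Q ⧸ I))) [A₀.FiniteIndex]
    (Q₀ : Subgroup Q) [Q₀.FiniteIndex]
    (hinv : ∀ q ∈ Q₀, ∀ a ∈ A₀, φ q a ∈ A₀)
    (H : Subgroup (Multiplicative (MonoidAlgebra ℤ Q ⧸ I) ⋊[φ] Q))
    (hH : H = A₀.map (inl : _ →* Multiplicative (MonoidAlgebra ℤ Q ⧸ I) ⋊[φ] Q)
            ⊔ Q₀.map (inr : Q →* Multiplicative (MonoidAlgebra ℤ Q ⧸ I) ⋊[φ] Q))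
    (f : H →* Multiplicative (MonoidAlgebra ℤ Q ⧸ I) ⋊[φ] Q)
    (hnot : ¬ ∀ x : H,
      (x : Multiplicative (MonoidAlgebra ℤ Q ⧸ I) ⋊[φ] Q)
          ∈ A₀.map (inl : _ →* Multiplicative (MonoidAlgebra ℤ Q ⧸ I) ⋊[φ] Q) →
      ∃ a', f x = inl a') :
    (∀ x : H,
      (x : Multiplicative (MonoidAlgebra ℤ Q ⧸ I) ⋊[φ] Q)
          ∈ A₀.map (inl : _ →* Multiplicative (MonoidAlgebra ℤ Q ⧸ I) ⋊[φ] Q) →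
      (∃ a', f x = inl a') → f x = 1) ∧
    (∃ g : A₀ →* Q, ∀ (x : H) (a : Multiplicative (MonoidAlgebra ℤ Q ⧸ I))
        (ha : a ∈ A₀),
      (x : Multiplicative (MonoidAlgebra ℤ Q ⧸ I) ⋊[φ] Q) = inl a →
      (g ⟨a, ha⟩ = 1 ↔ ∃ a', f x = inl a')) := by
  push_neg at hnot
  obtain ⟨x₀, hx₀mem, hx₀⟩ := hnot
  -- the right component of f x₀ is nontrivial
  have hq : (f x₀).right ≠ 1 := by
    intro h
    exact hx₀ (f x₀).left (by ext <;> simp [h])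
  set q : Q := (f x₀).right with hqdef
  -- mk (of q) ≠ 1
  have hmk : Ideal.Quotient.mk I (MonoidAlgebra.of ℤ Q q) ≠ 1 := by
    intro h
    refine hq (hC q fun r => ?_)
    have h2 := hφ q (Multiplicative.toAdd r)
    rw [h, mul_one] at h2
    simpa using h2
  constructor
  · rintro x hxmem ⟨a', hfa⟩
    obtain ⟨a, _, hxa⟩ := hxmem
    obtain ⟨a₀, _, hx₀a⟩ := hx₀mem
    -- x and x₀ commute
    have hcomm : x * x₀ = x₀ * x := by
      apply Subtype.ext
      push_cast
      rw [← hxa, ← hx₀a, ← map_mul, ← map_mul, mul_comm]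
    have hfcomm : f x * f x₀ = f x₀ * f x := by
      rw [← map_mul, ← map_mul, hcomm]
    have hleft := congrArg SemidirectProduct.left hfcomm
    rw [hfa] at hleft
    simp only [mul_left, left_inl, right_inl, map_one, MulAut.one_apply] at hleft
    -- hleft : a' * (f x₀).left = (f x₀).left * φ q a'
    have key : a' = φ q a' := by
      rw [mul_comm a' (f x₀).left] at hleft
      exact mul_left_cancel hleft
    -- translate to ring
    have : Multiplicative.toAdd a'
        = Multiplicative.toAdd a' * Ideal.Quotient.mk I (MonoidAlgebra.of ℤ Q q) := by
      have h2 := hφ q (Multiplicative.toAdd a')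
      simp only [ofAdd_toAdd] at h2
      rw [← key] at h2
      have h3 := congrArg Multiplicative.toAdd h2
      simpa using h3
    have hz : Multiplicative.toAdd a'
        * (Ideal.Quotient.mk I (MonoidAlgebra.of ℤ Q q) - 1) = 0 := by
      ring_nf
      linear_combination this.symm
    rcases mul_eq_zero.mp hz with h | h
    · have : a' = 1 := by
        have := congrArg Multiplicative.ofAdd h
        simpa using this
      rw [hfa, this, map_one]
    · exact absurd (by linear_combination h) hmk
  · -- embedding part
    have hιmem : ∀ a : A₀,
        (inl (a : Multiplicative (MonoidAlgebra ℤ Q ⧸ I))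
          : Multiplicative (MonoidAlgebra ℤ Q ⧸ I) ⋊[φ] Q) ∈ H := by
      intro a
      rw [hH]
      exact Subgroup.mem_sup_left ⟨a, a.2, rfl⟩
    let ι : A₀ →* H :=
      { toFun := fun a => ⟨inl a, hιmem a⟩
        map_one' := by ext <;> simp
        map_mul' := fun a b => by ext <;> simp }
    refine ⟨rightHom.comp (f.comp ι), fun x a ha hxa => ?_⟩
    have hx : x = ι ⟨a, ha⟩ := Subtype.ext hxa
    rw [hx]
    simp only [MonoidHom.comp_apply, rightHom_eq_right]
    constructor
    · intro h
      exact ⟨(f (ι ⟨a, ha⟩)).left, by ext <;> simp [h]⟩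
    · rintro ⟨a', h⟩
      rw [h]
      simp [rightHom_eq_right]
end

section
/- Let $g(t) = \lambda t^z \in \mathbb{C}[[t]]$ with $\lambda \neq 0$, $z > 0$, and let $n, c_1, c_2$ be positive integers. Suppose there exist integers $j_1 < j_2$ and roots of unity $v_{j_1}, v_{j_2}$ such that $g(t^{(n/c_1)^{j_1}})^{(c_2/n)^{j_1}} v_{j_1} = g(t^{(n/c_1)^{j_2}})^{(c_2/n)^{j_2}} v_{j_2}$ as elements of the field $\bigcup_{m>0}\mathbb{C}((t^{1/m}))$. Then $c_1 = c_2$, and if moreover $c_2 \neq n$ then $\lambda$ is algebraic over $\mathbb{Q}$. -/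
private lemma aux_alg0 (x : ℂ) (hx : x ≠ 0) (A B : ℕ) (h' : B < A) (h : x ^ A = x ^ B) :
    IsAlgebraic ℚ x := by
  have hd : x ^ (A - B) = 1 := by
    have h2 : x ^ B * x ^ (A - B) = x ^ B * 1 := by
      rw [mul_one, ← pow_add, show B + (A - B) = A by omega]; exact h
    exact mul_left_cancel₀ (pow_ne_zero B hx) h2
  refine ⟨Polynomial.X ^ (A - B) - Polynomial.C 1,
    Polynomial.X_pow_sub_C_ne_zero (by omega) 1, ?_⟩
  simp [hd]

private lemma aux_alg (x : ℂ) (hx : x ≠ 0) (A B : ℕ) (hAB : A ≠ B) (h : x ^ A = x ^ B) :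
    IsAlgebraic ℚ x := by
  rcases hAB.lt_or_gt with h' | h'
  · exact aux_alg0 x hx B A h' h.symm
  · exact aux_alg0 x hx A B h' h

/-- Case 1 of the Puiseux-series argument: let `g(t) = λ t^z` with `λ ≠ 0`,
`z > 0`, and `n, c₁, c₂` positive integers.  Suppose for integers `j₁ < j₂`
there are roots of unity `v₁, v₂` and compatible roots `μ₁, μ₂` of `λ`
(`μᵢ ^ (n ^ jᵢ) = λ ^ (c₂ ^ jᵢ)`, interpreting `λ ^ ((c₂/n) ^ jᵢ)`) such that
`g(t^{(n/c₁)^{j₁}})^{(c₂/n)^{j₁}} v₁ = g(t^{(n/c₁)^{j₂}})^{(c₂/n)^{j₂}} v₂`,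
i.e. `λ^{(c₂/n)^{j₁}} t^{z (c₂/c₁)^{j₁}} v₁ = λ^{(c₂/n)^{j₂}} t^{z (c₂/c₁)^{j₂}} v₂`
in the field `⋃_{m>0} ℂ((t^{1/m}))` (modelled inside the Hahn series field
`HahnSeries ℚ ℂ`).  Then `c₁ = c₂`, and if moreover `c₂ ≠ n` then `λ` is
algebraic over `ℚ`. -/
theorem puiseux_case_one (lam : ℂ) (hlam : lam ≠ 0)
    (z n c₁ c₂ : ℕ) (hz : 0 < z) (hn : 0 < n) (hc₁ : 0 < c₁) (hc₂ : 0 < c₂)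
    (j₁ j₂ : ℕ) (hj : j₁ < j₂)
    (v₁ v₂ : ℂ) (hv₁ : ∃ k : ℕ, 0 < k ∧ v₁ ^ k = 1) (hv₂ : ∃ k : ℕ, 0 < k ∧ v₂ ^ k = 1)
    (μ₁ μ₂ : ℂ) (hμ₁ : μ₁ ^ (n ^ j₁) = lam ^ (c₂ ^ j₁)) (hμ₂ : μ₂ ^ (n ^ j₂) = lam ^ (c₂ ^ j₂))
    (heq : (HahnSeries.single ((z : ℚ) * ((c₂ : ℚ) / (c₁ : ℚ)) ^ j₁) (μ₁ * v₁)
              : HahnSeries ℚ ℂ)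
         = HahnSeries.single ((z : ℚ) * ((c₂ : ℚ) / (c₁ : ℚ)) ^ j₂) (μ₂ * v₂)) :
    c₁ = c₂ ∧ (c₂ ≠ n → IsAlgebraic ℚ lam) := by
  obtain ⟨k₁, hk₁, hvk₁⟩ := hv₁
  obtain ⟨k₂, hk₂, hvk₂⟩ := hv₂
  have hμ₁0 : μ₁ ≠ 0 := by
    intro h
    apply hlam
    have : lam ^ (c₂ ^ j₁) = 0 := by rw [← hμ₁, h, zero_pow (by positivity)]
    exact pow_eq_zero_iff (by positivity) |>.mp this
  have hv₁0 : v₁ ≠ 0 := by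
    intro h; rw [h, zero_pow hk₁.ne'] at hvk₁; exact zero_ne_one hvk₁
  have hcoeff0 : μ₁ * v₁ ≠ 0 := mul_ne_zero hμ₁0 hv₁0
  set a : ℚ := (z : ℚ) * ((c₂ : ℚ) / (c₁ : ℚ)) ^ j₁ with ha
  set b : ℚ := (z : ℚ) * ((c₂ : ℚ) / (c₁ : ℚ)) ^ j₂ with hb
  have hcoeff : μ₁ * v₁ = if a = b then μ₂ * v₂ else 0 := by
    have := congrArg (fun f : HahnSeries ℚ ℂ => f.coeff a) heq
    simp only [HahnSeries.coeff_single, if_true] at this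
    convert this using 2
  have hab : a = b := by
    by_contra hne
    rw [if_neg hne] at hcoeff
    exact hcoeff0 hcoeff
  rw [if_pos hab] at hcoeff
  -- exponent comparison
  have hr0 : (0:ℚ) < (c₂ : ℚ) / (c₁ : ℚ) := by positivity
  have hrpow : ((c₂ : ℚ) / (c₁ : ℚ)) ^ j₁ = ((c₂ : ℚ) / (c₁ : ℚ)) ^ j₂ :=
    mul_left_cancel₀ (by exact_mod_cast hz.ne') hab
  set r : ℚ := (c₂ : ℚ) / (c₁ : ℚ) with hrdef
  have hr1 : r = 1 := by
    have he : r ^ (j₂ - j₁) = 1 := by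
      have h2 : r ^ j₁ * r ^ (j₂ - j₁) = r ^ j₁ * 1 := by
        rw [mul_one, ← pow_add, show j₁ + (j₂ - j₁) = j₂ by omega]; exact hrpow.symm
      exact mul_left_cancel₀ (pow_ne_zero _ hr0.ne') h2
    rcases lt_trichotomy r 1 with h | h | h
    · exfalso
      have := pow_lt_one₀ hr0.le h (by omega : j₂ - j₁ ≠ 0)
      rw [he] at this; exact lt_irrefl 1 this
    · exact h
    · exfalso
      have := one_lt_pow₀ h (by omega : j₂ - j₁ ≠ 0)
      rw [he] at this; exact lt_irrefl 1 this
  have hc12 : c₁ = c₂ := by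
    have : (c₂ : ℚ) = (c₁ : ℚ) := by
      have hc₁0 : (c₁ : ℚ) ≠ 0 := by positivity
      rw [hrdef, div_eq_one_iff_eq hc₁0] at hr1; exact_mod_cast hr1
    exact_mod_cast this.symm
  refine ⟨hc12, fun hne => ?_⟩
  -- coefficient comparison
  set K := k₁ * k₂ with hK
  have hK0 : 0 < K := Nat.mul_pos hk₁ hk₂
  have hmain : (μ₁ * v₁) ^ (n ^ j₂ * K) = (μ₂ * v₂) ^ (n ^ j₂ * K) := by rw [hcoeff]
  have hvK₁ : v₁ ^ (n ^ j₂ * K) = 1 := by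
    rw [show n ^ j₂ * K = k₁ * (k₂ * n ^ j₂) by ring, pow_mul, hvk₁, one_pow]
  have hvK₂ : v₂ ^ (n ^ j₂ * K) = 1 := by
    rw [show n ^ j₂ * K = k₂ * (k₁ * n ^ j₂) by ring, pow_mul, hvk₂, one_pow]
  rw [mul_pow, mul_pow, hvK₁, hvK₂, mul_one, mul_one] at hmain
  have hnj : n ^ j₂ = n ^ j₁ * n ^ (j₂ - j₁) := by
    rw [← pow_add, show j₁ + (j₂ - j₁) = j₂ by omega]
  have e1 : n ^ j₂ * K = n ^ j₁ * (n ^ (j₂ - j₁) * K) := by rw [hnj]; ring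
  have h1 : μ₁ ^ (n ^ j₂ * K) = lam ^ (c₂ ^ j₁ * n ^ (j₂ - j₁) * K) := by
    rw [e1, pow_mul, hμ₁, ← pow_mul]
    congr 1
    ring
  have h2 : μ₂ ^ (n ^ j₂ * K) = lam ^ (c₂ ^ j₂ * K) := by
    rw [pow_mul, hμ₂, ← pow_mul]
  have hlampow : lam ^ (c₂ ^ j₁ * n ^ (j₂ - j₁) * K) = lam ^ (c₂ ^ j₂ * K) := by
    rw [← h1, ← h2, hmain]
  apply aux_alg lam hlam _ _ _ hlampow
  intro hAB
  apply hne
  have hc₂e : c₂ ^ j₂ = c₂ ^ j₁ * c₂ ^ (j₂ - j₁) := by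
    rw [← pow_add, show j₁ + (j₂ - j₁) = j₂ by omega]
  rw [hc₂e] at hAB
  have h3 : n ^ (j₂ - j₁) = c₂ ^ (j₂ - j₁) :=
    Nat.eq_of_mul_eq_mul_left (pow_pos hc₂ j₁) (Nat.eq_of_mul_eq_mul_right hK0 hAB)
  exact (Nat.pow_left_injective (by omega : j₂ - j₁ ≠ 0) h3).symm
end
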